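/- Let V ⊂ ℝ³ be a finite set in which no two distinct points agree in any coordinate, and define u ∼ v iff u ≠ v and every w ∈ V ∖ {u,v} satisfies w₁ > max(u₁,v₁) or w₂ > max(u₂,v₂) or w₃ ∉ [min(u₃,v₃), max(u₃,v₃)]. Then for every v ∈ V there are at most 2 points u ∈ V with u₁ < v₁, u₂ < v₂ and u ∼ v. -/
import Mathlib


open scoped Classical

/-- The edge relation (⋆) for graphs with a realizer of the form `{π₁, π₂, π₃, π̄₃}`:
`u ∼ v` iff `u ≠ v` and every other point `w` of `V` satisfies
`w₁ > max(u₁,v₁)` or `w₂ > max(u₂,v₂)` or `w₃ ∉ [min(u₃,v₃), max(u₃,v₃)]`. -/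
def Rel3 (V : Finset (Fin 3 → ℝ)) (u v : Fin 3 → ℝ) : Prop :=
  u ≠ v ∧ ∀ w ∈ V, w ≠ u → w ≠ v →
    max (u 0) (v 0) < w 0 ∨ max (u 1) (v 1) < w 1 ∨
    w 2 ∉ Set.Icc (min (u 2) (v 2)) (max (u 2) (v 2))

/-- Fact 1: a vertex `v` has at most two neighbors `u` with `u₁ < v₁` and `u₂ < v₂`. -/
theorem at_most_two_sw_neighbors (V : Finset (Fin 3 → ℝ))
    (hgen : ∀ p ∈ V, ∀ q ∈ V, p ≠ q → ∀ i, p i ≠ q i)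
    (v : Fin 3 → ℝ) (hv : v ∈ V) :
    (V.filter (fun u => u 0 < v 0 ∧ u 1 < v 1 ∧ Rel3 V u v)).card ≤ 2 := by
  -- key: a witness strictly between u₂ and v₂ kills Rel3 V u v
  have key : ∀ u u' : Fin 3 → ℝ, u' ∈ V → u' 0 < v 0 → u' 1 < v 1 →
      Rel3 V u v → u' ≠ u → u' ≠ v →
      min (u 2) (v 2) < u' 2 → u' 2 < max (u 2) (v 2) → False := by
    intro u u' hu' h1' h2' hr hne hne' hlo hhi
    rcases hr.2 u' hu' hne hne' with h | h | h
    · exact absurd h1' (lt_of_le_of_lt (le_max_right _ _) h).asymm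
    · exact absurd h2' (lt_of_le_of_lt (le_max_right _ _) h).asymm
    · exact h ⟨hlo.le, hhi.le⟩
  have hinj : Set.InjOn (fun u : Fin 3 → ℝ => decide (u 2 < v 2))
      ↑(V.filter (fun u => u 0 < v 0 ∧ u 1 < v 1 ∧ Rel3 V u v)) := by
    intro u hu u' hu' heq
    simp only [Finset.coe_filter, Set.mem_setOf_eq] at hu hu'
    obtain ⟨huV, h1, h2, hr⟩ := hu
    obtain ⟨hu'V, h1', h2', hr'⟩ := hu'
    by_contra hne
    have hnv : u ≠ v := fun h => absurd h1 (by rw [h]; exact lt_irrefl _)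
    have hnv' : u' ≠ v := fun h => absurd h1' (by rw [h]; exact lt_irrefl _)
    have huv2 : u 2 ≠ v 2 := hgen u huV v hv hnv 2
    have hu'v2 : u' 2 ≠ v 2 := hgen u' hu'V v hv hnv' 2
    have huu'2 : u 2 ≠ u' 2 := hgen u huV u' hu'V hne 2
    simp only [decide_eq_decide] at heq
    rcases lt_or_gt_of_ne huv2 with hlt | hgt
    · have hlt' : u' 2 < v 2 := lt_of_le_of_ne (le_of_not_gt fun h =>
        absurd (heq.mp hlt) h.asymm) hu'v2
      rcases lt_or_gt_of_ne huu'2 with hc | hc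
      · exact key u u' hu'V h1' h2' hr (Ne.symm hne) hnv'
          (lt_of_le_of_lt (min_le_left _ _) hc)
          (lt_of_lt_of_le hlt' (le_max_right _ _))
      · exact key u' u huV h1 h2 hr' hne hnv
          (lt_of_le_of_lt (min_le_left _ _) hc)
          (lt_of_lt_of_le hlt (le_max_right _ _))
    · have hgt' : v 2 < u' 2 := lt_of_le_of_ne (le_of_not_gt fun h =>
        absurd (heq.mpr h) hgt.asymm) (Ne.symm hu'v2)
      rcases lt_or_gt_of_ne huu'2 with hc | hc
      · exact key u' u huV h1 h2 hr' hne hnv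
          (lt_of_le_of_lt (min_le_right _ _) hgt)
          (lt_of_lt_of_le hc (le_max_left _ _))
      · exact key u u' hu'V h1' h2' hr (Ne.symm hne) hnv'
          (lt_of_le_of_lt (min_le_right _ _) hgt')
          (lt_of_lt_of_le hc (le_max_left _ _))
  calc (V.filter (fun u => u 0 < v 0 ∧ u 1 < v 1 ∧ Rel3 V u v)).card
      ≤ (Finset.univ : Finset Bool).card :=
        Finset.card_le_card_of_injOn _ (fun _ _ => Finset.mem_univ _) hinj
    _ = 2 := by simp
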